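/- arXiv:2107.06141 — 8 statements merged into one kernel-verified Lean document; each statement's English description precedes it below -/
import Mathlib

section
/- In the multinomial logit model with J+1 alternatives, fix a duration value d and covariate value x, and let the individual-specific transition probabilities be π_{kj}(α) = exp(α(j) + β_{kj}(d)) / Σ_{ℓ=0}^{J} exp(α(ℓ) + β_{kℓ}(d)) for α ∈ ℝ^{J+1} and real switching-cost parameters β_{kℓ}(d). Then for any three alternatives j, k, ℓ ∈ {0,...,J} with j ≠ k and j ≠ ℓ, and for every α ∈ ℝ^{J+1}: exp(β_{kℓ}(d) − β_{kj}(d) + β_{jj}(d) − β_{jℓ}(d)) = (π_{kℓ}(α) · π_{jj}(α)) / (π_{kj}(α) · π_{jℓ}(α)). (Lemma 1.) -/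
/-! Within a row `k` the logit probabilities share the normalising sum, so the odds
`π_{kℓ} / π_{kj}` equal `exp (α ℓ + β_{kℓ} - α j - β_{kj})` (independence of irrelevant
alternatives). Multiplying the odds of row `k` by those of row `j` in the opposite direction
cancels the intercepts `α j` and `α ℓ`. -/

open Finset

theorem exp_div_sum_exp_div_exp_div_sum_exp {ι : Type*} [Fintype ι] (v : ι → ℝ) (a b : ι) :
    (Real.exp (v a) / ∑ i, Real.exp (v i)) / (Real.exp (v b) / ∑ i, Real.exp (v i))
      = Real.exp (v a - v b) := by
  have hsum : (∑ i, Real.exp (v i)) ≠ 0 :=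
    (sum_pos (fun i _ => Real.exp_pos (v i)) ⟨a, mem_univ a⟩).ne'
  rw [div_div_div_cancel_right₀ hsum, Real.exp_sub]

theorem lemma1_multinomial_logit_general (J : ℕ)
    (β : Fin (J + 1) → Fin (J + 1) → ℝ)
    (π : (Fin (J + 1) → ℝ) → Fin (J + 1) → Fin (J + 1) → ℝ)
    (hπ : ∀ (α : Fin (J + 1) → ℝ) (k j : Fin (J + 1)),
      π α k j = Real.exp (α j + β k j) / ∑ l : Fin (J + 1), Real.exp (α l + β k l))
    (j k l : Fin (J + 1))
    (α : Fin (J + 1) → ℝ) :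
    Real.exp (β k l - β k j + β j j - β j l)
      = (π α k l * π α j j) / (π α k j * π α j l) := by
  have odds (r a b : Fin (J + 1)) :
      π α r a / π α r b = Real.exp (α a + β r a - (α b + β r b)) := by
    rw [hπ, hπ]
    exact exp_div_sum_exp_div_exp_div_sum_exp (fun i => α i + β r i) a b
  rw [mul_div_mul_comm, odds, odds, ← Real.exp_add]
  ring_nf

/-- Lemma 1 (multinomial logit): for transition probabilities
`π_{kj}(α) = exp(α j + β k j) / Σ_ℓ exp(α ℓ + β k ℓ)` and any alternatives
`j ≠ k`, `j ≠ ℓ`, we have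
`exp(β kℓ − β kj + β jj − β jℓ) = (π kℓ · π jj) / (π kj · π jℓ)`. -/
theorem lemma1_multinomial_logit (J : ℕ)
    (β : Fin (J + 1) → Fin (J + 1) → ℝ)
    (π : (Fin (J + 1) → ℝ) → Fin (J + 1) → Fin (J + 1) → ℝ)
    (hπ : ∀ (α : Fin (J + 1) → ℝ) (k j : Fin (J + 1)),
      π α k j = Real.exp (α j + β k j) / ∑ l : Fin (J + 1), Real.exp (α l + β k l))
    (j k l : Fin (J + 1)) (hjk : j ≠ k) (hjl : j ≠ l)
    (α : Fin (J + 1) → ℝ) :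
    Real.exp (β k l - β k j + β j j - β j l)
      = (π α k l * π α j j) / (π α k j * π α j l) :=
  lemma1_multinomial_logit_general J β π hπ j k l α
end

section
/- In the binary choice AR(1) logit model with fixed effect α ∈ ℝ and state-dependence parameter β ∈ ℝ, the n-periods forward individual-specific causal effect Δ^{(n)}(α) (defined via the two-state Markov chain with transition probabilities π_{01}(α) = Λ(α), π_{11}(α) = Λ(α+β)) satisfies, for every n ≥ 1: Δ^{(n)}(α) = (e^β − 1)^n · (π_{10}(α))^n · (π_{01}(α))^n = (e^β − 1)^n · (1 − Λ(α+β))^n · (Λ(α))^n. (Lemma 2.) -/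
/-! Each period applies the same affine map `y ↦ Λ(α) + (Λ(α+β) − Λ(α)) y` to both chains, so the
gap between the chains started at `1` and at `0` is multiplied by the slope `Λ(α+β) − Λ(α)` per
period; that slope factors as `(e^β − 1)(1 − Λ(α+β)) Λ(α)`. -/

/-- The logistic function `Λ(u) = e^u / (1 + e^u)`. -/
noncomputable def logistic (u : ℝ) : ℝ := Real.exp u / (1 + Real.exp u)

theorem sub_eq_pow_mul_sub_of_affine_recursion {R : Type*} [CommRing R] (c d : R)
    (E : ℕ → R → R) (hEs : ∀ n y, E (n + 1) y = c + d * E n y) (n : ℕ) (y y' : R) :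
    E n y - E n y' = d ^ n * (E 0 y - E 0 y') := by
  induction n with
  | zero => rw [pow_zero, one_mul]
  | succ k ih => rw [hEs, hEs, pow_succ, mul_right_comm, ← ih]; ring

theorem logistic_add_sub_logistic (a b : ℝ) :
    logistic (a + b) - logistic a = (Real.exp b - 1) * (1 - logistic (a + b)) * logistic a := by
  unfold logistic
  rw [Real.exp_add]
  field_simp
  ring

theorem lemma2_n_period_effect_general (α β : ℝ) (E : ℕ → ℝ → ℝ)
    (hE0 : ∀ y : ℝ, E 0 y = y)
    (hEs : ∀ (n : ℕ) (y : ℝ),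
      E (n + 1) y = logistic α + (logistic (α + β) - logistic α) * E n y)
    (n : ℕ) :
    E n 1 - E n 0
      = (Real.exp β - 1) ^ n * (1 - logistic (α + β)) ^ n * (logistic α) ^ n := by
  rw [sub_eq_pow_mul_sub_of_affine_recursion _ _ E hEs, hE0, hE0, sub_zero, mul_one,
    logistic_add_sub_logistic, mul_pow, mul_pow]

/-- Lemma 2: in the binary AR(1) logit model, the `n`-periods forward
individual-specific causal effect `Δ⁽ⁿ⁾(α) = E n 1 − E n 0` (with the
two-state Markov chain recursion `E 0 y = y`,
`E (n+1) y = π01(α) + (π11(α) − π01(α)) · E n y`, where `π01(α) = Λ(α)` and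
`π11(α) = Λ(α+β)`) satisfies, for every `n ≥ 1`,
`Δ⁽ⁿ⁾(α) = (e^β − 1)^n · (1 − Λ(α+β))^n · (Λ(α))^n`. -/
theorem lemma2_n_period_effect (α β : ℝ) (E : ℕ → ℝ → ℝ)
    (hE0 : ∀ y : ℝ, E 0 y = y)
    (hEs : ∀ (n : ℕ) (y : ℝ),
      E (n + 1) y = logistic α + (logistic (α + β) - logistic α) * E n y)
    (n : ℕ) (hn : 1 ≤ n) :
    E n 1 - E n 0
      = (Real.exp β - 1) ^ n * (1 - logistic (α + β)) ^ n * (logistic α) ^ n :=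
  lemma2_n_period_effect_general α β E hE0 hEs n
end

section
/- Let μ be a probability measure on ℝ^{J+1} and let p* : {0,...,J} × ℝ^{J+1} → [0,1] be a measurable function with Σ_{k=0}^{J} p*(k, α) = 1 for all α. With multinomial logit transition probabilities π_{kj}(α) = exp(α(j) + β_{kj}) / Σ_{ℓ=0}^{J} exp(α(ℓ) + β_{kℓ}), define the choice-history probabilities P_{y1,y2} = ∫ p*(y1, α) · π_{y1 y2}(α) dμ(α) and P_{y1,y2,y3} = ∫ p*(y1, α) · π_{y1 y2}(α) · π_{y2 y3}(α) dμ(α), and the average transition probability Π_{jj} = ∫ π_{jj}(α) dμ(α). Then for every alternative j ∈ {0,...,J}: Π_{jj} = P_{j,j} + Σ_{k ≠ j} [ P_{k,j,j} + Σ_{ℓ ≠ j} exp(β_{kℓ} − β_{kj} + β_{jj} − β_{jℓ}) · P_{k,j,ℓ} ]. (Proposition 1.) -/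
/-!
Pointwise in `α`, the logit odds ratios give
`exp (β k l - β k j + β j j - β j l) · π_{kj} π_{jl} = π_{jj} π_{kl}`, so the bracket belonging
to `k` collapses to `p*(k, α) π_{jj} (π_{kj} + Σ_{l ≠ j} π_{kl}) = p*(k, α) π_{jj}`; summing over
`k` against the initial distribution leaves `π_{jj}`. Every integrand takes values in `[0, 1]`,
hence is integrable, and the identity integrates term by term.
-/

open MeasureTheory

open Finset in
theorem diag_eq_sum_weighted_histories {ι : Type*} [Fintype ι] [DecidableEq ι]
    (P c : ι → ι → ℝ) (p : ι → ℝ) (j : ι) (hP : ∀ k, ∑ l, P k l = 1) (hp : ∑ k, p k = 1)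
    (hc : ∀ k l, c k l * (P k j * P j l) = P j j * P k l) :
    p j * P j j + ∑ k ∈ univ.filter (fun k => k ≠ j),
        (p k * P k j * P j j + ∑ l ∈ univ.filter (fun l => l ≠ j), c k l * (p k * P k j * P j l))
      = P j j := by
  have hrow : ∀ k, p k * P k j * P j j
      + ∑ l ∈ univ.filter (fun l => l ≠ j), c k l * (p k * P k j * P j l) = p k * P j j := by
    intro k
    have hrest : ∑ l ∈ univ.filter (fun l => l ≠ j), P k l = 1 - P k j := by
      rw [filter_ne', sum_erase_eq_sub (mem_univ j), hP]
    calc p k * P k j * P j j + ∑ l ∈ univ.filter (fun l => l ≠ j), c k l * (p k * P k j * P j l)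
        = p k * P j j * (P k j + ∑ l ∈ univ.filter (fun l => l ≠ j), P k l) := by
          rw [mul_add, mul_sum]
          exact congrArg₂ _ (by ring) (sum_congr rfl fun l _ => by linear_combination p k * hc k l)
      _ = p k * P j j := by rw [hrest, add_sub_cancel, mul_one]
  rw [sum_congr rfl fun k _ => hrow k, filter_ne', add_sum_erase _ (fun k => p k * P j j)
    (mem_univ j), ← sum_mul, hp, one_mul]

section Logit

variable {ι : Type*} [Fintype ι]

noncomputable def logitProb (β : ι → ι → ℝ) (α : ι → ℝ) (k j : ι) : ℝ :=
  Real.exp (α j + β k j) / ∑ l, Real.exp (α l + β k l)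

@[fun_prop]
theorem measurable_logitProb (β : ι → ι → ℝ) (k l : ι) :
    Measurable fun α => logitProb β α k l := by
  unfold logitProb
  fun_prop

variable [Nonempty ι] (β : ι → ι → ℝ)

theorem logitProb_denom_pos (α : ι → ℝ) (k : ι) : 0 < ∑ l, Real.exp (α l + β k l) :=
  Finset.sum_pos (fun _ _ => Real.exp_pos _) Finset.univ_nonempty

theorem sum_logitProb (α : ι → ℝ) (k : ι) : ∑ l, logitProb β α k l = 1 := by
  simp only [logitProb]
  rw [← Finset.sum_div, div_self (logitProb_denom_pos β α k).ne']

theorem logitProb_mem_unitInterval (α : ι → ℝ) (k l : ι) : logitProb β α k l ∈ unitInterval :=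
  ⟨div_nonneg (Real.exp_pos _).le (logitProb_denom_pos β α k).le,
    (div_le_one (logitProb_denom_pos β α k)).2 <|
      Finset.single_le_sum (f := fun i => Real.exp (α i + β k i))
        (fun _ _ => (Real.exp_pos _).le) (Finset.mem_univ l)⟩

theorem exp_mul_logitProb_mul_logitProb (α : ι → ℝ) (j k l : ι) :
    Real.exp (β k l - β k j + β j j - β j l) * (logitProb β α k j * logitProb β α j l)
      = logitProb β α j j * logitProb β α k l := by
  have hexp : Real.exp (β k l - β k j + β j j - β j l)
      * (Real.exp (α j + β k j) * Real.exp (α l + β j l))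
      = Real.exp (α j + β j j) * Real.exp (α l + β k l) := by
    simp only [← Real.exp_add]
    ring_nf
  simp only [logitProb]
  field_simp
  linear_combination hexp

end Logit

theorem integrable_of_mem_unitInterval {Ω : Type*} [MeasurableSpace Ω] {μ : Measure Ω}
    [IsFiniteMeasure μ] {f : Ω → ℝ} (hf : Measurable f) (h01 : ∀ ω, f ω ∈ unitInterval) :
    Integrable f μ :=
  Integrable.of_bound hf.aestronglyMeasurable 1 <| ae_of_all _ fun ω => by
    rw [Real.norm_of_nonneg (h01 ω).1]
    exact (h01 ω).2

theorem integral_add_sum_add_sum_const_mul {Ω ι κ : Type*} [MeasurableSpace Ω] {μ : Measure Ω}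
    {s : Finset ι} {t : Finset κ} {f : Ω → ℝ} {g : ι → Ω → ℝ} {h : ι → κ → Ω → ℝ}
    (c : ι → κ → ℝ) (hf : Integrable f μ) (hg : ∀ i ∈ s, Integrable (g i) μ)
    (hh : ∀ i ∈ s, ∀ k ∈ t, Integrable (h i k) μ) :
    ∫ ω, (f ω + ∑ i ∈ s, (g i ω + ∑ k ∈ t, c i k * h i k ω)) ∂μ
      = ∫ ω, f ω ∂μ + ∑ i ∈ s, (∫ ω, g i ω ∂μ + ∑ k ∈ t, c i k * ∫ ω, h i k ω ∂μ) := by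
  have hrow : ∀ i ∈ s, Integrable (fun ω => g i ω + ∑ k ∈ t, c i k * h i k ω) μ := fun i hi =>
    (hg i hi).add (integrable_finsetSum _ fun k hk => (hh i hi k hk).const_mul _)
  rw [integral_add hf (integrable_finsetSum _ hrow), integral_finsetSum _ hrow]
  refine congrArg _ (Finset.sum_congr rfl fun i hi => ?_)
  rw [integral_add (hg i hi) (integrable_finsetSum _ fun k hk => (hh i hi k hk).const_mul _),
    integral_finsetSum _ fun k hk => (hh i hi k hk).const_mul _]
  simp only [integral_const_mul]

/-- Proposition 1: in the multinomial logit model with transition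
probabilities `π_{kj}(α) = exp(α j + β k j) / Σ_ℓ exp(α ℓ + β k ℓ)`,
an arbitrary probability measure `μ` on `ℝ^{J+1}` for the unobserved
heterogeneity, and an unrestricted initial condition `p*(k, α)`
(measurable in `α`, nonnegative, summing to one over `k`), the average
transition probability `Π_{jj} = ∫ π_{jj}(α) dμ(α)` satisfies
`Π_{jj} = P_{j,j} + Σ_{k ≠ j} [P_{k,j,j} + Σ_{ℓ ≠ j} exp(β kℓ − β kj + β jj − β jℓ) · P_{k,j,ℓ}]`,
where `P_{y1,y2}` and `P_{y1,y2,y3}` are the corresponding choice-history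
probabilities. -/
theorem prop1_average_transition (J : ℕ)
    (β : Fin (J + 1) → Fin (J + 1) → ℝ)
    (π : (Fin (J + 1) → ℝ) → Fin (J + 1) → Fin (J + 1) → ℝ)
    (hπ : ∀ (α : Fin (J + 1) → ℝ) (k j : Fin (J + 1)),
      π α k j = Real.exp (α j + β k j) / ∑ l : Fin (J + 1), Real.exp (α l + β k l))
    (μ : Measure (Fin (J + 1) → ℝ)) [IsProbabilityMeasure μ]
    (pstar : Fin (J + 1) → (Fin (J + 1) → ℝ) → ℝ)
    (hmeas : ∀ k, Measurable (pstar k))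
    (hnn : ∀ k α, 0 ≤ pstar k α)
    (hsum : ∀ α, ∑ k : Fin (J + 1), pstar k α = 1)
    (j : Fin (J + 1)) :
    (∫ α, π α j j ∂μ)
      = (∫ α, pstar j α * π α j j ∂μ)
        + ∑ k ∈ Finset.univ.filter (fun k => k ≠ j),
            ((∫ α, pstar k α * π α k j * π α j j ∂μ)
              + ∑ l ∈ Finset.univ.filter (fun l => l ≠ j),
                  Real.exp (β k l - β k j + β j j - β j l)
                    * ∫ α, pstar k α * π α k j * π α j l ∂μ) := by
  obtain rfl : π = logitProb β := funext fun α => funext₂ (hπ α)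
  have hp01 : ∀ k α, pstar k α ∈ unitInterval := fun k α =>
    ⟨hnn k α, (Finset.single_le_sum (fun i _ => hnn i α) (Finset.mem_univ k)).trans (hsum α).le⟩
  have hint : ∀ k l, Integrable (fun α => pstar k α * logitProb β α k j * logitProb β α j l) μ :=
    fun k l => integrable_of_mem_unitInterval (by fun_prop) fun α =>
      unitInterval.mul_mem (unitInterval.mul_mem (hp01 k α) (logitProb_mem_unitInterval β α k j))
        (logitProb_mem_unitInterval β α j l)
  have hint₀ : Integrable (fun α => pstar j α * logitProb β α j j) μ :=
    integrable_of_mem_unitInterval (by fun_prop) fun α =>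
      unitInterval.mul_mem (hp01 j α) (logitProb_mem_unitInterval β α j j)
  refine (integral_congr_ae <| ae_of_all _ fun α => (diag_eq_sum_weighted_histories _ _ _ j
    (sum_logitProb β α) (hsum α) (exp_mul_logitProb_mul_logitProb β α j)).symm).trans ?_
  exact integral_add_sum_add_sum_const_mul _ hint₀ (fun k _ => hint k j) fun k _ l _ => hint k l
end

section
/- Let μ be a probability measure on ℝ and p* : ℝ → [0,1] a measurable function, interpreted as the probability that the initial choice is 0 given α (so the probability of initial choice 1 is 1 − p*(α)). In the binary AR(1) logit model with transition probabilities π_{01}(α) = Λ(α), π_{11}(α) = Λ(α+β), π_{00}(α) = 1 − Λ(α), π_{10}(α) = 1 − Λ(α+β), define P_{y1,y2} and P_{y1,y2,y3} as the integrals over μ of the product of the initial-condition probability of y1 and the corresponding transition probabilities, and define Π_{11} = ∫ π_{11}(α) dμ(α) and Π_{00} = ∫ π_{00}(α) dμ(α). Then: Π_{11} = P_{1,1} + P_{0,1,1} + e^β · P_{0,1,0}, and Π_{00} = P_{0,0} + P_{1,0,0} + e^β · P_{1,0,1}. (Corollary 1.1, equation (35).) -/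
/-!
The whole argument is the pointwise odds-ratio identity
`e^β Λ(α) (1 - Λ(α+β)) = Λ(α+β) (1 - Λ(α))`, i.e. `Λ(u) / (1 - Λ(u)) = e^u`.
Splitting `Λ(α+β) = (1 - p*) Λ(α+β) + p* Λ(α) Λ(α+β) + p* Λ(α+β) (1 - Λ(α))` and rewriting the
last term with the identity gives the first equation after integrating against `μ`; the second
is the same computation with the roles of the two states exchanged. All integrands take values
in `[0, 1]`, so they are integrable against the probability measure `μ`.
-/

open MeasureTheory

open unitInterval

lemma logistic_mem_unitInterval (u : ℝ) : logistic u ∈ unitInterval := by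
  unfold logistic
  exact ⟨by positivity, (div_le_one (by positivity)).2 (by linarith)⟩

@[fun_prop]
lemma measurable_logistic : Measurable logistic := by
  unfold logistic
  fun_prop

lemma exp_mul_logistic_mul_one_sub_logistic_add (α β : ℝ) :
    Real.exp β * (logistic α * (1 - logistic (α + β)))
      = logistic (α + β) * (1 - logistic α) := by
  unfold logistic
  field_simp
  rw [Real.exp_add]
  ring

section

variable {X : Type*} [MeasurableSpace X] {μ : Measure X}

lemma integrable_of_mem_unitInterval_s6 [IsFiniteMeasure μ] {f : X → ℝ} (hf : Measurable f)
    (hI : ∀ x, f x ∈ unitInterval) :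
    Integrable f μ :=
  .of_bound hf.aestronglyMeasurable 1 <| .of_forall fun x ↦ by
    rw [Real.norm_of_nonneg (hI x).1]
    exact (hI x).2

lemma integral_eq_add_add_const_mul {f g h k : X → ℝ} (c : ℝ) (hf : Integrable f μ)
    (hg : Integrable g μ) (hh : Integrable h μ)
    (hk : ∀ x, k x = f x + g x + c * h x) :
    ∫ x, k x ∂μ = ∫ x, f x ∂μ + ∫ x, g x ∂μ + c * ∫ x, h x ∂μ := by
  simp_rw [hk]
  rw [integral_add (f := fun x ↦ f x + g x) (hf.add hg) (hh.const_mul c), integral_add hf hg,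
    integral_const_mul]

end

/-- Corollary 1.1, equation (35): in the binary AR(1) logit model with
transition probabilities `π01 = Λ(α)`, `π11 = Λ(α+β)`, `π00 = 1 − Λ(α)`,
`π10 = 1 − Λ(α+β)`, probability measure `μ` on `ℝ` for the heterogeneity,
and `p*(α)` the probability that the initial choice is 0 given `α`:
`Π11 = P_{1,1} + P_{0,1,1} + e^β · P_{0,1,0}` and
`Π00 = P_{0,0} + P_{1,0,0} + e^β · P_{1,0,1}`. -/
theorem cor11_eq35 (β : ℝ) (μ : Measure ℝ) [IsProbabilityMeasure μ]
    (pstar : ℝ → ℝ) (hmeas : Measurable pstar)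
    (h0 : ∀ α, 0 ≤ pstar α) (h1 : ∀ α, pstar α ≤ 1) :
    ((∫ α, logistic (α + β) ∂μ)
      = (∫ α, (1 - pstar α) * logistic (α + β) ∂μ)
        + (∫ α, pstar α * logistic α * logistic (α + β) ∂μ)
        + Real.exp β * ∫ α, pstar α * logistic α * (1 - logistic (α + β)) ∂μ)
    ∧ ((∫ α, (1 - logistic α) ∂μ)
      = (∫ α, pstar α * (1 - logistic α) ∂μ)
        + (∫ α, (1 - pstar α) * (1 - logistic (α + β)) * (1 - logistic α) ∂μ)
        + Real.exp β * ∫ α, (1 - pstar α) * (1 - logistic (α + β)) * logistic α ∂μ) := by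
  have hp α : pstar α ∈ unitInterval := ⟨h0 α, h1 α⟩
  have hq α : 1 - pstar α ∈ unitInterval := Set.Icc.mem_iff_one_sub_mem.1 (hp α)
  have hΛ := logistic_mem_unitInterval
  have hΛc u : 1 - logistic u ∈ unitInterval := Set.Icc.mem_iff_one_sub_mem.1 (hΛ u)
  constructor
  · refine integral_eq_add_add_const_mul _ ?_ ?_ ?_ fun α ↦ ?_
    · exact integrable_of_mem_unitInterval_s6 (by fun_prop) fun α ↦ mul_mem (hq α) (hΛ _)
    · exact integrable_of_mem_unitInterval_s6 (by fun_prop) fun α ↦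
        mul_mem (mul_mem (hp α) (hΛ _)) (hΛ _)
    · exact integrable_of_mem_unitInterval_s6 (by fun_prop) fun α ↦
        mul_mem (mul_mem (hp α) (hΛ _)) (hΛc _)
    · linear_combination (-pstar α) * exp_mul_logistic_mul_one_sub_logistic_add α β
  · refine integral_eq_add_add_const_mul _ ?_ ?_ ?_ fun α ↦ ?_
    · exact integrable_of_mem_unitInterval_s6 (by fun_prop) fun α ↦ mul_mem (hp α) (hΛc _)
    · exact integrable_of_mem_unitInterval_s6 (by fun_prop) fun α ↦
        mul_mem (mul_mem (hq α) (hΛc _)) (hΛc _)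
    · exact integrable_of_mem_unitInterval_s6 (by fun_prop) fun α ↦
        mul_mem (mul_mem (hq α) (hΛc _)) (hΛ _)
    · linear_combination (pstar α - 1) * exp_mul_logistic_mul_one_sub_logistic_add α β
end

section
/- Consider the binary AR(1) logit model with T ≥ 2 periods. Suppose w : {0,1}^T → ℝ is a system of weights such that for each initial value y1 ∈ {0,1} and every α ∈ ℝ: Σ_{y ∈ {0,1}^T, first component of y equals y1} w(y) · Π_{t=2}^{T} π_{y_{t−1} y_t}(α) = Λ(α+β) − Λ(α). Then for every probability measure μ on ℝ and every measurable initial-condition function p* : ℝ → [0,1]: Σ_{y ∈ {0,1}^T} w(y) · P_y = ∫ (Λ(α+β) − Λ(α)) dμ(α) = AME^{(1)}, where P_y = ∫ q(y1, α) · Π_{t=2}^{T} π_{y_{t−1} y_t}(α) dμ(α) with q(0,α) = p*(α), q(1,α) = 1 − p*(α). (Sufficiency direction of Lemma 3, specialized to the binary AR(1) model.) -/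
open MeasureTheory

/-- Transition probability of the binary AR(1) logit model:
probability of next choice `y'` given lagged choice `y` and fixed effect `α`,
where the probability of choosing 1 is `Λ(α + β·y)`. -/
noncomputable def logitTrans (α β : ℝ) (y y' : Bool) : ℝ :=
  if y' then logistic (α + β * (if y then 1 else 0))
  else 1 - logistic (α + β * (if y then 1 else 0))

/-! The weights identify `Λ(α+β) − Λ(α)` pointwise in `α` on each fibre `{y | y 0 = y₁}`, so
mixing the two fibres with the initial-condition probabilities `1 − p*(α)` and `p*(α)` (which sum
to one) still gives `Λ(α+β) − Λ(α)` for every `α`. Integrating against `μ` and exchanging the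
finite sum with the integral (all integrands are measurable with values in `[0, 1]`) gives the
claim. -/

lemma logistic_eq_sigmoid : logistic = Real.sigmoid := by
  ext u
  rw [logistic, Real.sigmoid_def, Real.exp_neg, div_eq_iff (by positivity)]
  field_simp
  ring

lemma logitTrans_mem_unitInterval (α β : ℝ) (y y' : Bool) : logitTrans α β y y' ∈ unitInterval := by
  have h : logistic (α + β * (if y then 1 else 0)) ∈ unitInterval := by
    rw [logistic_eq_sigmoid]
    exact ⟨Real.sigmoid_nonneg _, Real.sigmoid_le_one _⟩
  unfold logitTrans
  split
  · exact h
  · exact Set.Icc.mem_iff_one_sub_mem.mp h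

lemma continuous_logitTrans (β : ℝ) (y y' : Bool) : Continuous fun α => logitTrans α β y y' := by
  have h : Continuous fun α : ℝ => logistic (α + β * (if y then 1 else 0)) := by
    rw [logistic_eq_sigmoid]
    fun_prop
  unfold logitTrans
  split
  · exact h
  · exact continuous_const.sub h

lemma Finset.sum_mul_apply_eq_of_sum_fiber_eq {ι κ R : Type*} [Fintype ι] [Fintype κ]
    [DecidableEq κ] [CommSemiring R] (g : ι → κ) (f : ι → R) (q : κ → R) {c : R}
    (hf : ∀ j, ∑ i with g i = j, f i = c) :
    ∑ i, f i * q (g i) = c * ∑ j, q j := by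
  rw [← Finset.sum_fiberwise Finset.univ g, Finset.mul_sum]
  refine Finset.sum_congr rfl fun j _ => ?_
  rw [← hf j, Finset.sum_mul]
  exact Finset.sum_congr rfl fun i hi => by rw [(Finset.mem_filter.mp hi).2]

theorem lemma3_sufficiency_general (β : ℝ) (n : ℕ)
    (w : (Fin (n + 1) → Bool) → ℝ)
    (hw : ∀ (y1 : Bool) (α : ℝ),
      ∑ y ∈ Finset.univ.filter (fun y : Fin (n + 1) → Bool => y 0 = y1),
        w y * ∏ t : Fin n, logitTrans α β (y t.castSucc) (y t.succ)
      = logistic (α + β) - logistic α)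
    (μ : Measure ℝ) [IsProbabilityMeasure μ]
    (pstar : ℝ → ℝ) (hmeas : Measurable pstar)
    (h0 : ∀ α, 0 ≤ pstar α) (h1 : ∀ α, pstar α ≤ 1) :
    ∑ y : Fin (n + 1) → Bool,
        w y * ∫ α, (if y 0 then 1 - pstar α else pstar α)
          * ∏ t : Fin n, logitTrans α β (y t.castSucc) (y t.succ) ∂μ
      = ∫ α, (logistic (α + β) - logistic α) ∂μ := by
  set q : ℝ → Bool → ℝ := fun α b => if b then 1 - pstar α else pstar α
  set path : (Fin (n + 1) → Bool) → ℝ → ℝ :=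
    fun y α => ∏ t : Fin n, logitTrans α β (y t.castSucc) (y t.succ)
  have hq_mem (α : ℝ) (b : Bool) : q α b ∈ unitInterval := by
    have hp : pstar α ∈ unitInterval := ⟨h0 α, h1 α⟩
    cases b
    · exact hp
    · exact Set.Icc.mem_iff_one_sub_mem.mp hp
  have hint (y : Fin (n + 1) → Bool) : Integrable (fun α => q α (y 0) * path y α) μ := by
    refine Integrable.of_mem_Icc 0 1 (Measurable.aemeasurable ?_) (ae_of_all _ fun α =>
      unitInterval.mul_mem (hq_mem α _)
        (unitInterval.prod_mem fun t _ => logitTrans_mem_unitInterval ..))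
    refine Measurable.mul ?_ (Finset.measurable_prod _ fun t _ =>
      (continuous_logitTrans β _ _).measurable)
    cases y 0
    · exact hmeas
    · exact measurable_const.sub hmeas
  have hpoint (α : ℝ) : ∑ y, w y * (q α (y 0) * path y α) = logistic (α + β) - logistic α := by
    have h := Finset.sum_mul_apply_eq_of_sum_fiber_eq (fun y : Fin (n + 1) → Bool => y 0)
      (fun y => w y * path y α) (q α) (fun b => hw b α)
    simp only [Fintype.sum_bool, q, if_true, Bool.false_eq_true, if_false, sub_add_cancel,
      mul_one] at h
    rw [← h]
    exact Finset.sum_congr rfl fun y _ => by ring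
  calc ∑ y, w y * ∫ α, q α (y 0) * path y α ∂μ
      = ∫ α, ∑ y, w y * (q α (y 0) * path y α) ∂μ := by
        rw [integral_finsetSum _ fun y _ => (hint y).const_mul (w y)]
        exact Finset.sum_congr rfl fun y _ => (integral_const_mul _ _).symm
    _ = ∫ α, (logistic (α + β) - logistic α) ∂μ := integral_congr_ae (ae_of_all _ hpoint)

/-- Sufficiency direction of Lemma 3, specialized to the binary AR(1) logit
model with `T = n + 1 ≥ 2` periods: if the weights `w` satisfy, for each
initial value `y₁` and every `α`,
`Σ_{y : y 0 = y₁} w(y) · Π_t π_{y_{t−1} y_t}(α) = Λ(α+β) − Λ(α)`,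
then for every probability measure `μ` on `ℝ` and measurable
initial-condition function `p* : ℝ → [0,1]`,
`Σ_y w(y) · P_y = ∫ (Λ(α+β) − Λ(α)) dμ(α) = AME⁽¹⁾`, where
`P_y = ∫ q(y₁, α) · Π_t π_{y_{t−1} y_t}(α) dμ(α)` with `q(0,α) = p*(α)`,
`q(1,α) = 1 − p*(α)`. -/
theorem lemma3_sufficiency (β : ℝ) (n : ℕ) (hn : 1 ≤ n)
    (w : (Fin (n + 1) → Bool) → ℝ)
    (hw : ∀ (y1 : Bool) (α : ℝ),
      ∑ y ∈ Finset.univ.filter (fun y : Fin (n + 1) → Bool => y 0 = y1),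
        w y * ∏ t : Fin n, logitTrans α β (y t.castSucc) (y t.succ)
      = logistic (α + β) - logistic α)
    (μ : Measure ℝ) [IsProbabilityMeasure μ]
    (pstar : ℝ → ℝ) (hmeas : Measurable pstar)
    (h0 : ∀ α, 0 ≤ pstar α) (h1 : ∀ α, pstar α ≤ 1) :
    ∑ y : Fin (n + 1) → Bool,
        w y * ∫ α, (if y 0 then 1 - pstar α else pstar α)
          * ∏ t : Fin n, logitTrans α β (y t.castSucc) (y t.succ) ∂μ
      = ∫ α, (logistic (α + β) - logistic α) ∂μ :=
  lemma3_sufficiency_general β n w hw μ pstar hmeas h0 h1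
end

section
/- Let T ≥ 3 be an integer, let b > 0 with b ≠ 1, and fix y1 ∈ {0,1}. Then there exists a unique family of real weights { m(yT, n1) : yT ∈ {0,1}, n1 ∈ {yT, yT+1, ..., T−2+yT} } (a vector in ℝ^{2T−2}) such that the following polynomial identity in the real variable a holds: Σ_{yT ∈ {0,1}} Σ_{n1 = yT}^{T−2+yT} m(yT, n1) · a^{n1} · (1+a)^{n1−yT} · (1+ab)^{T−2−n1+yT} = (b−1) · a · (1+a)^{T−2−y1} · (1+ab)^{T−3+y1}. (Proposition 3: both sides are polynomials in a of degree at most 2T−3, and matching coefficients yields a nonsingular linear system of 2T−2 equations in the 2T−2 weights.) -/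
/-!
Write `q = X(1+X)` and `r = 1+bX`. The left-hand side is `∑ₖ (mₖ⁰ + mₖ¹ X) qᵏ r^(K-k)` with
`K = T-2`, a combination of the `2K+2` polynomials `X^y qᵏ r^(K-k)`, all of degree `≤ 2K+1`,
and so is the right-hand side. These polynomials are linearly independent: evaluating at the roots
`0` and `-1` of `q` kills the coefficients of `k = 0` (using `r(-1) = 1-b ≠ 0`), after which `q`
can be cancelled. Counting dimensions, they form a basis of the polynomials of degree `< 2K+2`,
so the weights exist and are unique.
-/

open Polynomial Finset Module

theorem LinearIndependent.existsUnique_sum_smul_eq {K V ι : Type*} [DivisionRing K]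
    [AddCommGroup V] [Module K V] [Fintype ι] {v : ι → V} (hv : LinearIndependent K v)
    {W : Submodule K V} [FiniteDimensional K W] (hvW : ∀ i, v i ∈ W)
    (hcard : finrank K W ≤ Fintype.card ι) {x : V} (hx : x ∈ W) :
    ∃! c : ι → K, ∑ i, c i • v i = x := by
  have hspan : Submodule.span K (Set.range v) = W :=
    Submodule.eq_of_le_of_finrank_le (Submodule.span_le.2 (Set.range_subset_iff.2 hvW))
      (by rwa [finrank_span_eq_card hv])
  obtain ⟨c, hc⟩ := (Submodule.mem_span_range_iff_exists_fun K).1 (hspan ▸ hx)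
  refine ⟨c, hc, fun c' hc' => hv.fintypeLinearCombination_injective ?_⟩
  simp only [Fintype.linearCombination_apply, hc, hc']

theorem Polynomial.mem_degreeLT_of_natDegree_lt {R : Type*} [Semiring R] {f : R[X]} {n : ℕ}
    (h : f.natDegree < n) : f ∈ degreeLT R n :=
  mem_degreeLT.2 (degree_le_natDegree.trans_lt (by exact_mod_cast h))

section Independence

variable {R : Type*} [CommRing R] [IsDomain R] {b : R}

theorem head_eq_zero_of_sum_mul_pow_mul_pow_eq_zero (hb : b ≠ 1) {K : ℕ}
    {p q : Fin (K + 1) → R}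
    (h : ∑ k, (C (p k) + C (q k) * X) * (X * (1 + X)) ^ (k : ℕ) * (1 + C b * X) ^ (K - k) = 0) :
    p 0 = 0 ∧ q 0 = 0 := by
  rw [Fin.sum_univ_succ] at h
  have hp : p 0 = 0 := by simpa [eval_finsetSum] using congrArg (eval 0) h
  have hq : q 0 * (1 - b) ^ K = 0 := by
    simpa [hp, eval_finsetSum, sub_eq_add_neg] using congrArg (eval (-1)) h
  exact ⟨hp, (mul_eq_zero.1 hq).resolve_right (pow_ne_zero _ (sub_ne_zero.2 hb.symm))⟩

theorem eq_zero_of_sum_mul_pow_mul_pow_eq_zero (hb : b ≠ 1) {K : ℕ} {p q : Fin (K + 1) → R}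
    (h : ∑ k, (C (p k) + C (q k) * X) * (X * (1 + X)) ^ (k : ℕ) * (1 + C b * X) ^ (K - k) = 0) :
    p = 0 ∧ q = 0 := by
  induction K with
  | zero =>
    obtain ⟨hp, hq⟩ := head_eq_zero_of_sum_mul_pow_mul_pow_eq_zero hb h
    exact ⟨funext fun k => k.fin_one_eq_zero ▸ hp, funext fun k => k.fin_one_eq_zero ▸ hq⟩
  | succ K ih =>
    obtain ⟨hp, hq⟩ := head_eq_zero_of_sum_mul_pow_mul_pow_eq_zero hb h
    have htail : ∑ k : Fin (K + 1), (C (p k.succ) + C (q k.succ) * X) * (X * (1 + X)) ^ (k : ℕ)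
        * (1 + C b * X) ^ (K - k) = 0 := by
      have hX : (X * (1 + X) : R[X]) ≠ 0 :=
        mul_ne_zero X_ne_zero (by simpa [add_comm] using X_add_C_ne_zero (1 : R))
      refine (mul_eq_zero.1 ?_).resolve_left hX
      rw [Fin.sum_univ_succ, hp, hq] at h
      rw [mul_sum]
      convert h using 1
      simp only [map_zero, zero_mul, add_zero, zero_add]
      refine sum_congr rfl fun k _ => ?_
      simp only [Fin.val_succ, Nat.reduceSubDiff, pow_succ]
      ring
    obtain ⟨hp', hq'⟩ := ih htail
    exact ⟨funext (Fin.cases hp (congrFun hp')), funext (Fin.cases hq (congrFun hq'))⟩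

end Independence

section WeightPoly

variable {R : Type*}

noncomputable def weightPoly [CommSemiring R] (b : R) (K : ℕ) (i : Bool × Fin (K + 1)) : R[X] :=
  X ^ i.1.toNat * (X * (1 + X)) ^ (i.2 : ℕ) * (1 + C b * X) ^ (K - i.2)

theorem weightPoly_mem_degreeLT [CommSemiring R] (b : R) (K : ℕ) (i : Bool × Fin (K + 1)) :
    weightPoly b K i ∈ degreeLT R (2 * K + 2) := by
  refine mem_degreeLT_of_natDegree_lt (Nat.lt_succ_of_le ?_)
  unfold weightPoly
  compute_degree
  have := i.1.toNat_le
  omega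

theorem eval_sum_smul_weightPoly [CommSemiring R] (b : R) (K : ℕ)
    (c : Bool × Fin (K + 1) → R) (a : R) :
    eval a (∑ i, c i • weightPoly b K i) = ∑ y : Bool, ∑ k : Fin (K + 1),
      c (y, k) * a ^ (y.toNat + (k : ℕ)) * (1 + a) ^ (k : ℕ) * (1 + a * b) ^ (K - k) := by
  rw [eval_finsetSum, Fintype.sum_prod_type]
  refine sum_congr rfl fun y _ => sum_congr rfl fun k _ => ?_
  simp only [weightPoly, smul_eq_C_mul, eval_mul, eval_C, eval_pow, eval_X, eval_add, eval_one,
    pow_add, mul_pow]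
  ring

theorem linearIndependent_weightPoly [CommRing R] [IsDomain R] {b : R} (hb : b ≠ 1) (K : ℕ) :
    LinearIndependent R (weightPoly b K) := by
  rw [Fintype.linearIndependent_iff]
  intro c hc
  have h : ∑ k, (C (c (false, k)) + C (c (true, k)) * X) * (X * (1 + X)) ^ (k : ℕ)
      * (1 + C b * X) ^ (K - k) = 0 := by
    rw [← hc, Fintype.sum_prod_type, Fintype.sum_bool, ← sum_add_distrib]
    refine sum_congr rfl fun k _ => ?_
    simp only [weightPoly, Bool.toNat_true, Bool.toNat_false, pow_one, pow_zero, one_mul,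
      smul_eq_C_mul]
    ring
  obtain ⟨hfalse, htrue⟩ := eq_zero_of_sum_mul_pow_mul_pow_eq_zero hb h
  rintro ⟨_ | _, k⟩
  · exact congrFun hfalse k
  · exact congrFun htrue k

end WeightPoly

theorem prop3_unique_weights_general (T : ℕ) (hT : 3 ≤ T) (b : ℝ)
    (hb1 : b ≠ 1) (y1 : Bool) :
    ∃! m : Bool → Fin (T - 1) → ℝ, ∀ a : ℝ,
      ∑ yT : Bool, ∑ k : Fin (T - 1),
        m yT k * a ^ (yT.toNat + (k : ℕ)) * (1 + a) ^ (k : ℕ)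
          * (1 + a * b) ^ (T - 2 - (k : ℕ))
      = (b - 1) * a * (1 + a) ^ (T - 2 - y1.toNat)
          * (1 + a * b) ^ (T - 3 + y1.toNat) := by
  obtain ⟨K, rfl⟩ : ∃ K, T = K + 2 := ⟨T - 2, by omega⟩
  set rhs : ℝ[X] := C (b - 1) * X * (1 + X) ^ (K - y1.toNat) * (1 + C b * X) ^ (K - 1 + y1.toNat)
  have hrhs : rhs ∈ degreeLT ℝ (2 * K + 2) := by
    refine mem_degreeLT_of_natDegree_lt (Nat.lt_succ_of_le ?_)
    simp only [rhs]
    compute_degree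
    -- `hT` gives `K ≥ 1`, so `K - 1` is not truncated
    have := y1.toNat_le
    omega
  have heval (a : ℝ) : eval a rhs
      = (b - 1) * a * (1 + a) ^ (K - y1.toNat) * (1 + a * b) ^ (K - 1 + y1.toNat) := by
    simp only [rhs, eval_mul, eval_add, eval_pow, eval_one, eval_X, eval_C]
    ring
  have hcard : finrank ℝ (degreeLT ℝ (2 * K + 2)) ≤ Fintype.card (Bool × Fin (K + 1)) := by
    simp only [finrank_eq_card_basis (degreeLT.basis ℝ _), Fintype.card_fin, Fintype.card_prod,
      Fintype.card_bool]
    omega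
  refine (Equiv.curry _ _ _).existsUnique_congr (fun c => ⟨fun h a => ?_, fun h => ?_⟩) |>.1
    ((linearIndependent_weightPoly hb1 K).existsUnique_sum_smul_eq
      (weightPoly_mem_degreeLT b K) hcard hrhs)
  · exact (eval_sum_smul_weightPoly b K c a).symm.trans ((congrArg (eval a) h).trans (heval a))
  · exact Polynomial.funext fun a =>
      (eval_sum_smul_weightPoly b K c a).trans ((h a).trans (heval a).symm)

/-- Proposition 3: for `T ≥ 3`, `b > 0`, `b ≠ 1`, and a fixed initial value
`y₁ ∈ {0,1}`, there is a unique family of weights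
`m(y_T, n₁)` for `y_T ∈ {0,1}` and `n₁ ∈ {y_T, …, T−2+y_T}` (parametrized
here by `y_T : Bool` and `k : Fin (T−1)` with `n₁ = y_T + k`) such that the
polynomial identity
`Σ_{y_T} Σ_{n₁} m(y_T,n₁) · a^{n₁} (1+a)^{n₁−y_T} (1+ab)^{T−2−n₁+y_T}
  = (b−1) · a · (1+a)^{T−2−y₁} (1+ab)^{T−3+y₁}`
holds for all real `a`. -/
theorem prop3_unique_weights (T : ℕ) (hT : 3 ≤ T) (b : ℝ)
    (hb : 0 < b) (hb1 : b ≠ 1) (y1 : Bool) :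
    ∃! m : Bool → Fin (T - 1) → ℝ, ∀ a : ℝ,
      ∑ yT : Bool, ∑ k : Fin (T - 1),
        m yT k * a ^ (yT.toNat + (k : ℕ)) * (1 + a) ^ (k : ℕ)
          * (1 + a * b) ^ (T - 2 - (k : ℕ))
      = (b - 1) * a * (1 + a) ^ (T - 2 - y1.toNat)
          * (1 + a * b) ^ (T - 3 + y1.toNat) :=
  prop3_unique_weights_general T hT b hb1 y1
end

section
/- Let Λ(u) = e^u/(1+e^u). For all real numbers α, β1 and all p0, p1 ≥ 0 with p0 + p1 = 1, define the conditional four-period history probabilities of the duration-dependent binary logit model (initial duration 1 when the initial choice is 1): P_{0010} = p0·(1−Λ(α))·Λ(α)·(1−Λ(α+β1)); P_{0100} = p0·Λ(α)·(1−Λ(α+β1))·(1−Λ(α)); P_{0011} = p0·(1−Λ(α))·Λ(α)·Λ(α+β1); P_{1010} = p1·(1−Λ(α+β1))·Λ(α)·(1−Λ(α+β1)); P_{1011} = p1·(1−Λ(α+β1))·Λ(α)·Λ(α+β1). Then: ((e^{β1}−1)/2)·(P_{0010} + P_{0100}) + ((e^{β1}−1)/e^{β1})·P_{0011} + (e^{β1}−1)·(P_{1010}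 + P_{1011}) = Λ(α+β1) − Λ(α). (Key pointwise identity in the proof of Proposition 5 for AME_{0→1}.) -/
open Real

theorem logistic_add_sub_logistic_s15 (α β : ℝ) :
    logistic (α + β) - logistic α = (exp β - 1) * logistic α * (1 - logistic (α + β)) := by
  have h₀ : 1 + exp α ≠ 0 := by positivity
  have h₁ : 1 + exp α * exp β ≠ 0 := by positivity
  simp only [logistic, exp_add]
  field_simp
  ring

theorem logistic_add_sub_logistic' (α β : ℝ) :
    logistic (α + β) - logistic α = (1 - exp (-β)) * logistic (α + β) * (1 - logistic α) := by
  have h := logistic_add_sub_logistic_s15 (α + β) (-β)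
  rw [add_neg_cancel_right] at h
  linear_combination -h

theorem prop5_pointwise_general (α β1 p0 p1 : ℝ)
    (hsum : p0 + p1 = 1) :
    ((Real.exp β1 - 1) / 2)
        * (p0 * (1 - logistic α) * logistic α * (1 - logistic (α + β1))
            + p0 * logistic α * (1 - logistic (α + β1)) * (1 - logistic α))
      + ((Real.exp β1 - 1) / Real.exp β1)
        * (p0 * (1 - logistic α) * logistic α * logistic (α + β1))
      + (Real.exp β1 - 1)
        * (p1 * (1 - logistic (α + β1)) * logistic α * (1 - logistic (α + β1))
            + p1 * (1 - logistic (α + β1)) * logistic α * logistic (α + β1))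
      = logistic (α + β1) - logistic α := by
  have hexp : (exp β1 - 1) / exp β1 = 1 - exp (-β1) := by
    rw [exp_neg]
    field_simp
  rw [hexp]
  linear_combination
    (logistic (α + β1) - logistic α) * hsum
      - (p0 * (1 - logistic α) + p1) * logistic_add_sub_logistic_s15 α β1
      - p0 * logistic α * logistic_add_sub_logistic' α β1

/-- Key pointwise identity in the proof of Proposition 5 for `AME_{0→1}`:
with the conditional four-period history probabilities of the
duration-dependent binary logit model (initial duration 1 when the initial
choice is 1), `p0 + p1 = 1`, `p0, p1 ≥ 0`, and `β₁ = β(1)`: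
`((e^{β₁}−1)/2)(P₀₀₁₀ + P₀₁₀₀) + ((e^{β₁}−1)/e^{β₁}) P₀₀₁₁
  + (e^{β₁}−1)(P₁₀₁₀ + P₁₀₁₁) = Λ(α+β₁) − Λ(α)`. -/
theorem prop5_pointwise (α β1 p0 p1 : ℝ)
    (hp0 : 0 ≤ p0) (hp1 : 0 ≤ p1) (hsum : p0 + p1 = 1) :
    ((Real.exp β1 - 1) / 2)
        * (p0 * (1 - logistic α) * logistic α * (1 - logistic (α + β1))
            + p0 * logistic α * (1 - logistic (α + β1)) * (1 - logistic α))
      + ((Real.exp β1 - 1) / Real.exp β1)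
        * (p0 * (1 - logistic α) * logistic α * logistic (α + β1))
      + (Real.exp β1 - 1)
        * (p1 * (1 - logistic (α + β1)) * logistic α * (1 - logistic (α + β1))
            + p1 * (1 - logistic (α + β1)) * logistic α * logistic (α + β1))
      = logistic (α + β1) - logistic α :=
  prop5_pointwise_general α β1 p0 p1 hsum
end

section
/- In the binary logit model with duration dependence, with history probabilities P_{y1,y2,y3,y4} defined by integrating over a probability measure μ on ℝ the conditional history probabilities (initial duration 1 when y1 = 1), and AME_{1→2} = ∫ (Λ(α+β2) − Λ(α+β1)) dμ(α), the following identity holds: AME_{1→2} = ((e^{β2} − e^{β1})/2)·(P_{0,0,1,0} + P_{0,1,0,0}) + ((e^{β2} − e^{β1})/e^{β1})·P_{0,0,1,1} + ( (e^{β2}(1 − e^{β2}))/e^{β1} + e^{β2} − 1 )·P_{0,1,1,0} + (1 − e^{β1}/e^{β2})·(P_{1,0,1,0} + P_{1,0,1,1}) + ( (e^{β2} − 1)/e^{β1} − 1 + 1/e^{β2} )·P_{1,1,0,0}. (Proposition 5, identification of AME_{1→2}, equation (70).) -/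
/-!
Pointwise in the fixed effect `α`, the individual effect `Λ(α + β₂) - Λ(α + β₁)` is a linear
combination, with coefficients depending only on `β₁` and `β₂`, of the conditional probabilities
of the histories `0010, 0100, 0011, 0110` that start in `0`; it is also such a combination of
the conditional probabilities of the histories `1010, 1011, 1100` that start in `1`. Weighting
the first identity by `p*(α)`, the second by `1 - p*(α)`, and integrating against `μ` turns the
conditional probabilities into the history probabilities `P`, whatever `μ` and `p*` are.
-/

open MeasureTheory Set

lemma logistic_mem_Icc (u : ℝ) : logistic u ∈ Icc (0 : ℝ) 1 :=
  unitInterval.div_mem (Real.exp_nonneg u) (by positivity) (by linarith)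

lemma one_sub_logistic_mem_Icc (u : ℝ) : 1 - logistic u ∈ Icc (0 : ℝ) 1 :=
  Icc.mem_iff_one_sub_mem.mp (logistic_mem_Icc u)

@[fun_prop]
lemma continuous_logistic : Continuous logistic := by
  unfold logistic
  fun_prop (disch := intro; positivity)

section HistoryIdentities

variable (β1 β2 α : ℝ)

lemma logistic_add_sub_logistic_add_eq_histories_from_zero :
    logistic (α + β2) - logistic (α + β1) =
      (Real.exp β2 - Real.exp β1) / 2
          * ((1 - logistic α) * logistic α * (1 - logistic (α + β1))
            + logistic α * (1 - logistic (α + β1)) * (1 - logistic α))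
        + (Real.exp β2 - Real.exp β1) / Real.exp β1
          * ((1 - logistic α) * logistic α * logistic (α + β1))
        + (Real.exp β2 * (1 - Real.exp β2) / Real.exp β1 + Real.exp β2 - 1)
          * (logistic α * logistic (α + β1) * (1 - logistic (α + β2))) := by
  simp only [logistic, Real.exp_add]
  field_simp
  ring

lemma logistic_add_sub_logistic_add_eq_histories_from_one :
    logistic (α + β2) - logistic (α + β1) =
      (1 - Real.exp β1 / Real.exp β2)
          * ((1 - logistic (α + β1)) * logistic α * (1 - logistic (α + β1))
            + (1 - logistic (α + β1)) * logistic α * logistic (α + β1))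
        + ((Real.exp β2 - 1) / Real.exp β1 - 1 + 1 / Real.exp β2)
          * (logistic (α + β1) * (1 - logistic (α + β2)) * (1 - logistic α)) := by
  simp only [logistic, Real.exp_add]
  field_simp
  ring

lemma logistic_add_sub_logistic_add_eq_histories (p : ℝ) :
    logistic (α + β2) - logistic (α + β1) =
      (Real.exp β2 - Real.exp β1) / 2
          * (p * (1 - logistic α) * logistic α * (1 - logistic (α + β1))
            + p * logistic α * (1 - logistic (α + β1)) * (1 - logistic α))
        + (Real.exp β2 - Real.exp β1) / Real.exp β1
          * (p * (1 - logistic α) * logistic α * logistic (α + β1))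
        + (Real.exp β2 * (1 - Real.exp β2) / Real.exp β1 + Real.exp β2 - 1)
          * (p * logistic α * logistic (α + β1) * (1 - logistic (α + β2)))
        + (1 - Real.exp β1 / Real.exp β2)
          * ((1 - p) * (1 - logistic (α + β1)) * logistic α * (1 - logistic (α + β1))
            + (1 - p) * (1 - logistic (α + β1)) * logistic α * logistic (α + β1))
        + ((Real.exp β2 - 1) / Real.exp β1 - 1 + 1 / Real.exp β2)
          * ((1 - p) * logistic (α + β1) * (1 - logistic (α + β2)) * (1 - logistic α)) := by
  linear_combination p * logistic_add_sub_logistic_add_eq_histories_from_zero β1 β2 α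
    + (1 - p) * logistic_add_sub_logistic_add_eq_histories_from_one β1 β2 α

end HistoryIdentities

/-- Proposition 5, identification of `AME_{1→2}` (equation (70)): in the
binary logit model with duration dependence (probability of choosing 1 is
`Λ(α)` after lagged choice 0 and `Λ(α + β(d))` after lagged choice 1 with
duration `d`; `β₁ = β(1)`, `β₂ = β(2)`; initial duration 1 when `y₁ = 1`),
`AME_{1→2} = ∫ (Λ(α+β₂) − Λ(α+β₁)) dμ(α)` equals the stated weighted sum
of the four-period history probabilities, with `p*(α)` the probability of
the initial condition `y₁ = 0`. -/
theorem prop5_AME_1_to_2 (β1 β2 : ℝ) (μ : Measure ℝ) [IsProbabilityMeasure μ]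
    (pstar : ℝ → ℝ) (hmeas : Measurable pstar)
    (h0 : ∀ α, 0 ≤ pstar α) (h1 : ∀ α, pstar α ≤ 1) :
    (∫ α, (logistic (α + β2) - logistic (α + β1)) ∂μ)
      = ((Real.exp β2 - Real.exp β1) / 2)
          * ((∫ α, pstar α * (1 - logistic α) * logistic α * (1 - logistic (α + β1)) ∂μ)
              + ∫ α, pstar α * logistic α * (1 - logistic (α + β1)) * (1 - logistic α) ∂μ)
        + ((Real.exp β2 - Real.exp β1) / Real.exp β1)
          * (∫ α, pstar α * (1 - logistic α) * logistic α * logistic (α + β1) ∂μ)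
        + ((Real.exp β2 * (1 - Real.exp β2)) / Real.exp β1 + Real.exp β2 - 1)
          * (∫ α, pstar α * logistic α * logistic (α + β1) * (1 - logistic (α + β2)) ∂μ)
        + (1 - Real.exp β1 / Real.exp β2)
          * ((∫ α, (1 - pstar α) * (1 - logistic (α + β1)) * logistic α * (1 - logistic (α + β1)) ∂μ)
              + ∫ α, (1 - pstar α) * (1 - logistic (α + β1)) * logistic α * logistic (α + β1) ∂μ)
        + ((Real.exp β2 - 1) / Real.exp β1 - 1 + 1 / Real.exp β2)
          * (∫ α, (1 - pstar α) * logistic (α + β1) * (1 - logistic (α + β2)) * (1 - logistic α) ∂μ) := by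
  have hp : ∀ α, pstar α ∈ Icc (0 : ℝ) 1 := fun α => ⟨h0 α, h1 α⟩
  have hq : ∀ α, 1 - pstar α ∈ Icc (0 : ℝ) 1 := fun α => Icc.mem_iff_one_sub_mem.mp (hp α)
  have hI : ∀ {f : ℝ → ℝ}, Measurable f → (∀ α, f α ∈ Icc (0 : ℝ) 1) → Integrable f μ :=
    fun hf h => .of_mem_Icc 0 1 hf.aemeasurable (.of_forall h)
  rw [integral_congr_ae
    (.of_forall fun α => logistic_add_sub_logistic_add_eq_histories β1 β2 α (pstar α))]
  -- every history integrand is a product of measurable factors with values in `[0, 1]`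
  simp (disch := (apply_rules only [Integrable.fun_add, Integrable.const_mul, hI] <;>
      first
        | fun_prop
        | (intro; apply_rules only
            [logistic_mem_Icc, one_sub_logistic_mem_Icc, hp, hq, unitInterval.mul_mem])))
    only [integral_add, integral_const_mul]
end
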